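/- arXiv:2107.02110 — 12 statements merged into one kernel-verified Lean document; each statement's English description precedes it below -/
import Mathlib

section
/- A function f in the ring B₁(X) of Baire one functions on a topological space X is a unit of B₁(X) if and only if its zero-set Z(f) = {x ∈ X : f(x) = 0} is empty. -/
open Filter Topology

def IsBaireOne {X : Type*} [TopologicalSpace X] (f : X → ℝ) : Prop :=
  ∃ u : ℕ → C(X, ℝ), ∀ x, Tendsto (fun n => u n x) atTop (𝓝 (f x))

/-- If `uₙ → f` pointwise, then `uₙ / (uₙ ^ 2 + 1 / (n + 1)) → f / f ^ 2 = f⁻¹`; the term `1 / (n + 1)`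
keeps these approximants continuous even where `uₙ` vanishes. -/
theorem IsBaireOne.inv {X : Type*} [TopologicalSpace X] {f : X → ℝ} (hf : IsBaireOne f)
    (hf₀ : ∀ x, f x ≠ 0) : IsBaireOne f⁻¹ := by
  obtain ⟨u, hu⟩ := hf
  have hden : ∀ n x, u n x ^ 2 + 1 / (n + 1 : ℝ) ≠ 0 := fun n x => by positivity
  refine ⟨fun n => ⟨fun x => u n x / (u n x ^ 2 + 1 / (n + 1 : ℝ)),
    (u n).continuous.div (by fun_prop) (hden n)⟩, fun x => ?_⟩
  have hlim_den : Tendsto (fun n : ℕ => u n x ^ 2 + 1 / (n + 1 : ℝ)) atTop (𝓝 (f x ^ 2)) := by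
    simpa using ((hu x).pow 2).add tendsto_one_div_add_atTop_nhds_zero_nat
  have hval : f x / f x ^ 2 = f⁻¹ x := by
    rw [Pi.inv_apply, sq, div_mul_cancel_left₀ (hf₀ x), inv_eq_one_div]
  rw [← hval]
  exact (hu x).div hlim_den (pow_ne_zero 2 (hf₀ x))

theorem Subring.isUnit_mk_iff_forall_ne_zero {X K : Type*} [Field K] {S : Subring (X → K)}
    (hS : ∀ g ∈ S, (∀ x, g x ≠ 0) → g⁻¹ ∈ S) {f : X → K} (hf : f ∈ S) :
    IsUnit (⟨f, hf⟩ : S) ↔ ∀ x, f x ≠ 0 := by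
  constructor
  · intro hunit x
    exact (Pi.isUnit_iff.mp (hunit.map S.subtype) x).ne_zero
  · intro hf₀
    refine IsUnit.of_mul_eq_one (⟨f⁻¹, hS f hf hf₀⟩ : S) (Subtype.ext (funext fun x => ?_))
    exact mul_inv_cancel₀ (hf₀ x)

theorem stmt_0_general {X : Type*} [TopologicalSpace X]
    (B : Subring (X → ℝ))
    (hB : ∀ f : X → ℝ, f ∈ B ↔ ∃ u : ℕ → C(X, ℝ),
      ∀ x, Filter.Tendsto (fun n => (u n) x) Filter.atTop (nhds (f x)))
    (f : X → ℝ) (hf : f ∈ B) :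
    IsUnit (⟨f, hf⟩ : B) ↔ {x | f x = 0} = ∅ := by
  have hB_inv : ∀ g ∈ B, (∀ x, g x ≠ 0) → g⁻¹ ∈ B := fun g hg hg₀ =>
    (hB _).mpr (IsBaireOne.inv ((hB g).mp hg) hg₀)
  rw [Subring.isUnit_mk_iff_forall_ne_zero hB_inv hf, Set.eq_empty_iff_forall_notMem]
  rfl

/-- `f` in the ring `B₁(X)` of Baire one functions is a unit iff `Z(f) = ∅`. -/
theorem stmt_0 {X : Type*} [TopologicalSpace X] [Nonempty X]
    (B : Subring (X → ℝ))
    (hB : ∀ f : X → ℝ, f ∈ B ↔ ∃ u : ℕ → C(X, ℝ),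
      ∀ x, Filter.Tendsto (fun n => (u n) x) Filter.atTop (nhds (f x)))
    (f : X → ℝ) (hf : f ∈ B) :
    IsUnit (⟨f, hf⟩ : B) ↔ {x | f x = 0} = ∅ :=
  stmt_0_general B hB f hf
end

section
/- Let A(X) be a subring of F(X) and B a nonempty subset of A(X) containing a nonzero element. Let S = ⋃_{b∈B} (X \ Z(b)) and define φ : A(X) → F(S) by restriction, φ(f) = f|_S. Then φ is a ring homomorphism whose kernel equals the annihilator Ann(B) = {f ∈ A(X) : fb = 0 for all b ∈ B}. -/
/-- restriction to `S = ⋃_{b∈B} (X \ Z(b))` is a ring homomorphism with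
kernel `Ann(B)`. -/
theorem stmt_1 {X : Type*} [TopologicalSpace X] [Nonempty X]
    (A : Subring (X → ℝ)) (B : Set (X → ℝ)) (hBA : B ⊆ (A : Set (X → ℝ)))
    (hBne : B.Nonempty) (hB0 : ∃ b ∈ B, b ≠ 0) :
    ∃ φ : A →+* (↥(⋃ b ∈ B, {x | b x ≠ 0}) → ℝ),
      (∀ f : A, ∀ s : ↥(⋃ b ∈ B, {x | b x ≠ 0}), φ f s = f.1 s) ∧
      (∀ f : A, f ∈ RingHom.ker φ ↔ ∀ b ∈ B, f.1 * b = 0) := by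
  refine ⟨{ toFun := fun f s => f.1 s,
            map_one' := rfl, map_mul' := fun f g => rfl,
            map_zero' := rfl, map_add' := fun f g => rfl }, fun f s => rfl, fun f => ?_⟩
  simp only [RingHom.mem_ker]
  constructor
  · intro h b hb
    funext x
    by_cases hx : b x = 0
    · simp [hx]
    · have hxS : x ∈ ⋃ b ∈ B, {x | b x ≠ 0} := Set.mem_biUnion hb hx
      have := congrFun h ⟨x, hxS⟩
      simp only [Pi.zero_apply] at this
      exact mul_eq_zero_of_left this (b x)
  · intro h
    funext s
    obtain ⟨b, hb, hbs⟩ := Set.mem_iUnion₂.mp s.2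
    have := congrFun (h b hb) s
    simp only [Pi.mul_apply, Pi.zero_apply] at this
    exact (mul_eq_zero.mp this).resolve_right hbs
end

section
/- Let I be a proper free ideal in a subring A(X) of F(X) containing all constant functions, and let p ∈ X. Then either there exists a nonzero ideal J ⊆ I with p ∈ ⋂_{g∈J} Z(g), or X is a disjoint union of two proper zero-sets of functions in A(X). -/
/-!
Take `J = I ∩ M_p`, where `M_p` is the kernel of evaluation at `p`; it lies in `I` and vanishes
at `p`, so it suffices to show `J ≠ 0`. If `J = 0`, then for `h ∈ I` and `a ∈ A` the product
`h · (a - a(p))` lies in `J`, hence vanishes; as `I` is free, every `x` has some `h ∈ I` with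
`h(x) ≠ 0`, so `a(x) = a(p)` and `A` consists of constants. An `f ∈ I` with `f(p) ≠ 0` is then a
nonzero constant, hence a unit, contradicting `I ≠ A`.
-/

section

variable {X K : Type*} [Field K] (A : Subring (X → K))

def evalAt (p : X) : A →+* K :=
  (Pi.evalRingHom (fun _ : X => K) p).comp A.subtype

variable {A}

theorem exists_mem_apply_ne_zero {I : Ideal A}
    (hfree : (⋂ f ∈ I, {x | (f : A).1 x = 0}) = ∅) (x : X) : ∃ f ∈ I, f.1 x ≠ 0 := by
  have hx : x ∉ ⋂ f ∈ I, {x | (f : A).1 x = 0} := hfree ▸ Set.notMem_empty x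
  simpa only [Set.mem_iInter, Set.mem_ofPred_eq, not_forall, exists_prop] using hx

theorem apply_eq_apply_of_inf_ker_evalAt_eq_bot (hconst : ∀ r : K, (fun _ : X => r) ∈ A)
    {I : Ideal A} (hfree : (⋂ f ∈ I, {x | (f : A).1 x = 0}) = ∅) {p : X}
    (hJ : I ⊓ RingHom.ker (evalAt A p) = ⊥) (a : A) (x : X) : a.1 x = a.1 p := by
  obtain ⟨h, hI, hx⟩ := exists_mem_apply_ne_zero hfree x
  have hmem : h * (a - ⟨fun _ => a.1 p, hconst _⟩) ∈ I ⊓ RingHom.ker (evalAt A p) :=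
    ⟨I.mul_mem_right _ hI, by simp [evalAt]⟩
  rw [hJ, Ideal.mem_bot] at hmem
  have hzero : h.1 x * (a.1 x - a.1 p) = 0 := congrFun (congrArg Subtype.val hmem) x
  exact sub_eq_zero.mp ((mul_eq_zero.mp hzero).resolve_left hx)

theorem Ideal.eq_top_of_apply_ne_zero_of_forall_const (hconst : ∀ r : K, (fun _ : X => r) ∈ A)
    {p : X} (hA : ∀ (a : A) (x : X), a.1 x = a.1 p) {I : Ideal A} {f : A} (hf : f ∈ I)
    (hfp : f.1 p ≠ 0) : I = ⊤ := by
  have hinv : f * ⟨fun _ => (f.1 p)⁻¹, hconst _⟩ = 1 := by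
    ext x
    simp [hA f x, hfp]
  exact I.eq_top_of_isUnit_mem hf (.of_mul_eq_one _ hinv)

end

theorem stmt_2_general {X : Type*}
    (A : Subring (X → ℝ)) (hconst : ∀ r : ℝ, (fun _ : X => r) ∈ A)
    (I : Ideal A) (hI : I ≠ ⊤)
    (hfree : (⋂ f ∈ I, {x | (f : ↥A).1 x = 0}) = ∅) (p : X) :
    (∃ J : Ideal A, J ≠ ⊥ ∧ J ≤ I ∧ ∀ g ∈ J, (g : ↥A).1 p = 0) ∨
    (∃ f g : A, {x | f.1 x = 0} ∪ {x | g.1 x = 0} = Set.univ ∧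
      {x | f.1 x = 0} ∩ {x | g.1 x = 0} = ∅ ∧
      {x | f.1 x = 0} ≠ ∅ ∧ {x | f.1 x = 0} ≠ Set.univ ∧
      {x | g.1 x = 0} ≠ ∅ ∧ {x | g.1 x = 0} ≠ Set.univ) := by
  refine .inl ⟨I ⊓ RingHom.ker (evalAt A p), fun hJ => hI ?_, inf_le_left, fun g hg => hg.2⟩
  obtain ⟨f, hf, hfp⟩ := exists_mem_apply_ne_zero hfree p
  exact Ideal.eq_top_of_apply_ne_zero_of_forall_const hconst
    (apply_eq_apply_of_inf_ker_evalAt_eq_bot hconst hfree hJ) hf hfp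

/-- for a proper free ideal `I` of `A(X)` (containing constants) and `p ∈ X`,
either there is a nonzero ideal `J ⊆ I` with `p ∈ ⋂_{g∈J} Z(g)`, or `X` is the disjoint
union of two proper zero-sets. -/
theorem stmt_2 {X : Type*} [TopologicalSpace X] [Nonempty X]
    (A : Subring (X → ℝ)) (hconst : ∀ r : ℝ, (fun _ : X => r) ∈ A)
    (I : Ideal A) (hI : I ≠ ⊤)
    (hfree : (⋂ f ∈ I, {x | (f : ↥A).1 x = 0}) = ∅) (p : X) :
    (∃ J : Ideal A, J ≠ ⊥ ∧ J ≤ I ∧ ∀ g ∈ J, (g : ↥A).1 p = 0) ∨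
    (∃ f g : A, {x | f.1 x = 0} ∪ {x | g.1 x = 0} = Set.univ ∧
      {x | f.1 x = 0} ∩ {x | g.1 x = 0} = ∅ ∧
      {x | f.1 x = 0} ≠ ∅ ∧ {x | f.1 x = 0} ≠ Set.univ ∧
      {x | g.1 x = 0} ≠ ∅ ∧ {x | g.1 x = 0} ≠ Set.univ) :=
  stmt_2_general A hconst I hI hfree p
end

section
/- Let A(X) be a subring of F(X) containing all constant functions. Then the Jacobson radical of A(X) is zero, i.e., the intersection of all maximal ideals of A(X) is {0}. -/
/-- `A(X)` (containing constants) is semisimple: the Jacobson radical,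
i.e. the intersection of all maximal ideals, is zero. -/
theorem stmt_6 {X : Type*} [TopologicalSpace X] [Nonempty X]
    (A : Subring (X → ℝ)) (hconst : ∀ r : ℝ, (fun _ : X => r) ∈ A) :
    (⊥ : Ideal A).jacobson = ⊥ := by
  refine le_antisymm ?_ bot_le
  intro f hf
  rw [Ideal.mem_jacobson_bot] at hf
  rw [Ideal.mem_bot]
  refine Subtype.ext (funext fun x => ?_)
  simp only [ZeroMemClass.coe_zero, Pi.zero_apply]
  by_contra hx
  obtain ⟨u, hu⟩ := hf ⟨fun _ => -((f : X → ℝ) x)⁻¹, hconst _⟩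
  have hux : ((u : A) : X → ℝ) x = 0 := by
    rw [hu]
    show (f : X → ℝ) x * -((f : X → ℝ) x)⁻¹ + 1 = 0
    rw [mul_neg, mul_inv_cancel₀ hx, neg_add_cancel]
  have h1 : ((u : A) : X → ℝ) x * (((u⁻¹ : Aˣ) : A) : X → ℝ) x = 1 := by
    have h : ((u : A) * ((u⁻¹ : Aˣ) : A)) = 1 := u.mul_inv
    have := congrFun (congrArg (Subtype.val) h) x
    exact this
  rw [hux, zero_mul] at h1
  exact zero_ne_one h1
end

section
/- Let X be a completely regular Hausdorff space and A(X) a subring of F(X) containing C(X). Then every fixed maximal ideal of A(X) is an essential ideal if and only if for every p ∈ X, the characteristic function χ_{p} of the singleton {p} does not belong to A(X). -/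
open Classical

lemma sep_lemma {X : Type*} [TopologicalSpace X] [T2Space X] [CompletelyRegularSpace X]
    {p q : X} (h : p ≠ q) : ∃ g : C(X, ℝ), g p = 0 ∧ g q = 1 := by
  obtain ⟨f, cf, hf0, hf1⟩ := CompletelyRegularSpace.completely_regular p {q}
    isClosed_singleton (by simpa using h)
  refine ⟨⟨fun x => (f x : ℝ), continuous_subtype_val.comp cf⟩, ?_, ?_⟩
  · simp [hf0]
  · have := hf1 (Set.mem_singleton q); simp [this]

/-- Evaluation at a point as a ring hom. -/
def evalHom {X : Type*} (A : Subring (X → ℝ)) (p : X) : A →+* ℝ where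
  toFun f := f.1 p
  map_one' := rfl
  map_mul' _ _ := rfl
  map_zero' := rfl
  map_add' _ _ := rfl

lemma evalHom_surj {X : Type*} [TopologicalSpace X] (A : Subring (X → ℝ))
    (hC : ∀ g : C(X, ℝ), (g : X → ℝ) ∈ A) (p : X) :
    Function.Surjective (evalHom A p) := by
  intro r
  exact ⟨⟨_, hC (ContinuousMap.const X r)⟩, rfl⟩

/-- every fixed maximal ideal of `A(X)` is essential iff no characteristic
function of a singleton belongs to `A(X)`. -/
theorem stmt_7 {X : Type*} [TopologicalSpace X] [T2Space X] [CompletelyRegularSpace X]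
    (A : Subring (X → ℝ)) (hC : ∀ g : C(X, ℝ), (g : X → ℝ) ∈ A) :
    (∀ M : Ideal A, M.IsMaximal → (⋂ f ∈ M, {x | (f : ↥A).1 x = 0}).Nonempty →
      (M ≠ ⊥ ∧ ∀ J : Ideal A, J ≠ ⊥ → M ⊓ J ≠ ⊥)) ↔
    ∀ p : X, (fun x => if x = p then (1 : ℝ) else 0) ∉ A := by
  constructor
  · -- forward direction
    intro h p hp
    set c : A := ⟨fun x => if x = p then (1 : ℝ) else 0, hp⟩ with hc
    have hcne : c ≠ 0 := by
      intro hz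
      have := congrFun (congrArg Subtype.val hz) p
      simp [hc] at this
    set M : Ideal A := RingHom.ker (evalHom A p) with hM
    have hmax : M.IsMaximal :=
      RingHom.ker_isMaximal_of_surjective _ (evalHom_surj A hC p)
    have hfix : (⋂ f ∈ M, {x | (f : ↥A).1 x = 0}).Nonempty := by
      refine ⟨p, ?_⟩
      simp only [Set.mem_iInter, Set.mem_setOf_eq]
      intro f hf
      exact hf
    obtain ⟨-, hess⟩ := h M hmax hfix
    have hJ : Ideal.span ({c} : Set A) ≠ ⊥ := by
      intro hz
      exact hcne (by simpa [hz] using Ideal.mem_span_singleton_self c)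
    refine hess _ hJ ?_
    rw [eq_bot_iff]
    rintro x ⟨hxM, hxJ⟩
    obtain ⟨a, ha⟩ := Ideal.mem_span_singleton'.mp hxJ
    have hxp : x.1 p = 0 := hxM
    have hax : ∀ y, x.1 y = a.1 y * (if y = p then (1 : ℝ) else 0) := by
      intro y
      have := congrFun (congrArg Subtype.val ha) y
      simpa [hc] using this.symm
    have hap : a.1 p = 0 := by have := hax p; simpa [hxp] using this.symm
    have : x = 0 := by
      apply Subtype.ext
      funext y
      by_cases hy : y = p
      · subst hy; simpa [hap] using hax y
      · simpa [hy] using hax y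
    simp [this]
  · -- backward direction
    intro h M hmax hfix
    obtain ⟨p, hp⟩ := hfix
    simp only [Set.mem_iInter, Set.mem_setOf_eq] at hp
    have hMle : M ≤ RingHom.ker (evalHom A p) := fun f hf => hp f hf
    have hkmax : (RingHom.ker (evalHom A p)).IsMaximal :=
      RingHom.ker_isMaximal_of_surjective _ (evalHom_surj A hC p)
    have hMeq : M = RingHom.ker (evalHom A p) :=
      hmax.eq_of_le hkmax.ne_top hMle
    -- there is a point other than p
    have hq : ∃ q : X, q ≠ p := by
      by_contra hX
      push_neg at hX
      apply h p
      have : (fun x => if x = p then (1 : ℝ) else 0) = ((1 : C(X, ℝ)) : X → ℝ) := by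
        funext x; simp [hX x]
      rw [this]; exact hC 1
    obtain ⟨q, hqp⟩ := hq
    obtain ⟨g, hg0, hg1⟩ := sep_lemma (Ne.symm hqp)
    set gA : A := ⟨g, hC g⟩ with hgA
    have hgAM : gA ∈ M := by
      rw [hMeq]
      exact hg0
    have hgAne : gA ≠ 0 := by
      intro hz
      have := congrFun (congrArg Subtype.val hz) q
      simp [hgA, hg1] at this
    constructor
    · intro hz
      rw [hz] at hgAM
      exact hgAne hgAM
    · intro J hJ hMJ
      obtain ⟨f, hfJ, hfne⟩ := Submodule.exists_mem_ne_zero_of_ne_bot hJ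
      by_cases hfp : f.1 p = 0
      · -- f itself is in M ⊓ J
        have : f ∈ M ⊓ J := ⟨hMeq ▸ hfp, hfJ⟩
        rw [hMJ] at this
        exact hfne this
      by_cases hfq : ∃ r : X, r ≠ p ∧ f.1 r ≠ 0
      · obtain ⟨r, hrp, hfr⟩ := hfq
        obtain ⟨g', hg'0, hg'1⟩ := sep_lemma (Ne.symm hrp)
        set x : A := ⟨g', hC g'⟩ * f with hx
        have hxM : x ∈ M := by
          rw [hMeq]
          show x.1 p = 0
          simp [hx, hg'0]
        have hxJ : x ∈ J := Ideal.mul_mem_left J _ hfJ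
        have hxne : x ≠ 0 := by
          intro hz
          have := congrFun (congrArg Subtype.val hz) r
          simp [hx, hg'1] at this
          exact hfr this
        have : x ∈ M ⊓ J := ⟨hxM, hxJ⟩
        rw [hMJ] at this
        exact hxne this
      · -- f vanishes off p, so χ_p ∈ A, contradiction
        push_neg at hfq
        apply h p
        set k : A := ⟨_, hC (ContinuousMap.const X (f.1 p)⁻¹)⟩ with hk
        have : (fun x => if x = p then (1 : ℝ) else 0) = ((k * f : A) : X → ℝ) := by
          funext y
          by_cases hy : y = p
          · subst hy
            simp [hk, inv_mul_cancel₀ hfp]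
          · simp [hy, hk, hfq y hy]
        rw [this]
        exact (k * f).2
end

section
/- Let A(X) be a subring of F(X) containing all constant functions and satisfying condition (*) (f is a unit iff Z(f)=∅). Then for any f ∈ A(X), the intersection M_f of all maximal ideals of A(X) containing f equals {g ∈ A(X) : Z(f) ⊆ Z(g)}. -/
/-- under condition (*) (with constants), `M_f`, the intersection of all
maximal ideals containing `f`, equals `{g : Z(f) ⊆ Z(g)}`. -/
theorem stmt_10 {X : Type*} [TopologicalSpace X] [Nonempty X]
    (A : Subring (X → ℝ)) (hconst : ∀ r : ℝ, (fun _ : X => r) ∈ A)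
    (hstar : ∀ f : A, IsUnit f ↔ {x | f.1 x = 0} = ∅)
    (f : A) :
    ∀ g : A, (∀ M : Ideal A, M.IsMaximal → f ∈ M → g ∈ M) ↔
      {x | f.1 x = 0} ⊆ {x | g.1 x = 0} := by
  intro g
  constructor
  · intro h x hx
    -- evaluation hom at x
    let φ : A →+* ℝ :=
      { toFun := fun h => h.1 x
        map_one' := rfl
        map_mul' := fun a b => rfl
        map_zero' := rfl
        map_add' := fun a b => rfl }
    have hsurj : Function.Surjective φ := fun r => ⟨⟨fun _ => r, hconst r⟩, rfl⟩
    have hmax : (RingHom.ker φ).IsMaximal := RingHom.ker_isMaximal_of_surjective φ hsurj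
    have hfker : f ∈ RingHom.ker φ := by simpa [φ, RingHom.mem_ker] using hx
    have := h _ hmax hfker
    simpa [φ, RingHom.mem_ker] using this
  · intro hZ M hM hf
    by_contra hg
    obtain ⟨a, m, hm, heq⟩ := hM.exists_inv hg
    have hmem : f * f + m * m ∈ M := M.add_mem (Ideal.mul_mem_left M f hf) (Ideal.mul_mem_left M m hm)
    have hnu : ¬ IsUnit (f * f + m * m) := fun hu => hM.ne_top (M.eq_top_of_isUnit_mem hmem hu)
    have hne : {x | (f * f + m * m).1 x = 0} ≠ ∅ := fun he => hnu ((hstar _).mpr he)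
    obtain ⟨x, hx⟩ := Set.nonempty_iff_ne_empty.mpr hne
    simp only [Set.mem_setOf_eq, Subring.coe_add, Subring.coe_mul, Pi.add_apply,
      Pi.mul_apply] at hx
    have hf0 : f.1 x = 0 := by nlinarith [sq_nonneg (f.1 x), sq_nonneg (m.1 x)]
    have hm0 : m.1 x = 0 := by nlinarith [sq_nonneg (f.1 x), sq_nonneg (m.1 x)]
    have hg0 : g.1 x = 0 := hZ hf0
    have h1 : ((a * g + m : A) : X → ℝ) x = ((1 : A) : X → ℝ) x := by rw [heq]
    simp only [Subring.coe_add, Subring.coe_mul, Pi.add_apply, Pi.mul_apply,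
      Subring.coe_one, Pi.one_apply, hg0, hm0, mul_zero, add_zero] at h1
    exact zero_ne_one h1
end

section
/- Let A(X) be a subring of F(X) containing all constant functions and satisfying condition (*). For a proper ideal I of A(X), the following are equivalent: (1) I is a z-ideal (for each f ∈ I, the intersection of all maximal ideals containing f is contained in I); (2) whenever f ∈ I, g ∈ A(X) and Z(f) ⊆ Z(g), then g ∈ I; (3) I = {g ∈ A(X) : Z(g) ∈ Z[I]} where Z[I] = {Z(f) : f ∈ I}. -/
/-- Key lemma: under condition (*) with constants, `g` lies in every maximal
ideal containing `f` iff `Z(f) ⊆ Z(g)`. -/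
theorem key_11 {X : Type*} [TopologicalSpace X] [Nonempty X]
    (A : Subring (X → ℝ)) (hconst : ∀ r : ℝ, (fun _ : X => r) ∈ A)
    (hstar : ∀ f : A, IsUnit f ↔ {x | f.1 x = 0} = ∅)
    (f g : A) :
    (∀ M : Ideal A, M.IsMaximal → f ∈ M → g ∈ M) ↔
      {x | f.1 x = 0} ⊆ {x | g.1 x = 0} := by
  constructor
  · intro h x hfx
    by_contra hgx
    -- evaluation at x gives a maximal ideal
    set φ : A →+* ℝ := (Pi.evalRingHom (fun _ => ℝ) x).comp A.subtype with hφ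
    have hsurj : Function.Surjective φ := fun r => ⟨⟨fun _ => r, hconst r⟩, rfl⟩
    have hmax : (RingHom.ker φ).IsMaximal := RingHom.ker_isMaximal_of_surjective φ hsurj
    have hfM : f ∈ RingHom.ker φ := by simpa [φ, RingHom.mem_ker] using hfx
    have := h _ hmax hfM
    rw [RingHom.mem_ker] at this
    exact hgx this
  · intro hsub M hM hfM
    by_contra hgM
    obtain ⟨h, c, hcM, hsum⟩ := hM.exists_inv hgM
    have huMem : f * f + c * c ∈ M := M.add_mem (M.mul_mem_left f hfM) (M.mul_mem_left c hcM)
    have hunit : IsUnit (f * f + c * c) := by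
      rw [hstar]
      ext x
      simp only [Set.mem_setOf_eq, Set.mem_empty_iff_false, iff_false]
      intro hx
      have hx' : f.1 x * f.1 x + c.1 x * c.1 x = 0 := hx
      have hf0 : f.1 x = 0 := by nlinarith [sq_nonneg (f.1 x), sq_nonneg (c.1 x)]
      have hc0 : c.1 x = 0 := by nlinarith [sq_nonneg (f.1 x), sq_nonneg (c.1 x)]
      have hg0 : g.1 x = 0 := hsub hf0
      have : (h * g + c).1 x = (1 : A).1 x := by rw [hsum]
      have : h.1 x * g.1 x + c.1 x = 1 := this
      rw [hg0, hc0] at this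
      simpa using this
    exact hM.ne_top (M.eq_top_of_isUnit_mem huMem hunit)

/-- under condition (*) (with constants), for a proper ideal `I`:
`I` is a z-ideal ↔ `I` is closed under enlarging zero-sets ↔ `I = Z⁻¹[Z[I]]`. -/
theorem stmt_11 {X : Type*} [TopologicalSpace X] [Nonempty X]
    (A : Subring (X → ℝ)) (hconst : ∀ r : ℝ, (fun _ : X => r) ∈ A)
    (hstar : ∀ f : A, IsUnit f ↔ {x | f.1 x = 0} = ∅)
    (I : Ideal A) (hI : I ≠ ⊤) :
    ((∀ f ∈ I, ∀ g : A, (∀ M : Ideal A, M.IsMaximal → f ∈ M → g ∈ M) → g ∈ I) ↔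
      (∀ f ∈ I, ∀ g : A, {x | (f : ↥A).1 x = 0} ⊆ {x | g.1 x = 0} → g ∈ I)) ∧
    ((∀ f ∈ I, ∀ g : A, {x | (f : ↥A).1 x = 0} ⊆ {x | g.1 x = 0} → g ∈ I) ↔
      (∀ g : A, g ∈ I ↔ ∃ f ∈ I, {x | g.1 x = 0} = {x | (f : ↥A).1 x = 0})) := by
  constructor
  · constructor
    · intro h f hf g hg
      exact h f hf g ((key_11 A hconst hstar f g).mpr hg)
    · intro h f hf g hg
      exact h f hf g ((key_11 A hconst hstar f g).mp hg)
  · constructor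
    · intro h g
      constructor
      · intro hg
        exact ⟨g, hg, rfl⟩
      · rintro ⟨f, hf, hzf⟩
        exact h f hf g (le_of_eq hzf.symm)
    · intro h f hf g hsub
      refine (h g).mpr ⟨f * g, I.mul_mem_right g hf, ?_⟩
      ext x
      simp only [Set.mem_setOf_eq]
      constructor
      · intro hg0
        show f.1 x * g.1 x = 0
        rw [hg0, mul_zero]
      · intro hfg
        have hfg' : f.1 x * g.1 x = 0 := hfg
        rcases mul_eq_zero.mp hfg' with h0 | h0
        · exact hsub h0
        · exact h0
end

section
/- Let X be a compact topological space and A(X) a subring of F(X) satisfying condition (*). Then every proper ideal I of A(X) is pseudofixed, i.e., ⋂_{f∈I} closure(Z(f)) ≠ ∅. -/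
/-- if `X` is compact, every proper ideal of `A(X)` (satisfying (*)) is
pseudofixed. -/
theorem stmt_13 {X : Type*} [TopologicalSpace X] [Nonempty X] [CompactSpace X]
    (A : Subring (X → ℝ))
    (hstar : ∀ f : A, IsUnit f ↔ {x | f.1 x = 0} = ∅)
    (I : Ideal A) (hI : I ≠ ⊤) :
    (⋂ f ∈ I, closure {x | (f : ↥A).1 x = 0}).Nonempty := by
  by_contra hne
  rw [Set.not_nonempty_iff_eq_empty] at hne
  -- reindex over subtype
  have hempty : (Set.univ : Set X) ∩ ⋂ i : {f : A // f ∈ I},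
      closure {x | (i.1 : X → ℝ) x = 0} = ∅ := by
    rw [Set.univ_inter, ← hne]
    ext x
    simp only [Set.mem_iInter, Subtype.forall, Set.mem_iInter₂]
  obtain ⟨t, ht⟩ := isCompact_univ.elim_finite_subfamily_closed
    (fun i : {f : A // f ∈ I} => closure {x | (i.1 : X → ℝ) x = 0})
    (fun i => isClosed_closure) hempty
  rw [Set.univ_inter] at ht
  set g : A := ∑ i ∈ t, i.1 ^ 2 with hg
  have hgI : g ∈ I := Ideal.sum_mem I fun i _ => by
    have : (i.1 : A) ^ 2 = i.1 * i.1 := sq i.1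
    rw [this]; exact Ideal.mul_mem_left I _ i.2
  have hZ : {x | (g : X → ℝ) x = 0} = ∅ := by
    ext x
    simp only [Set.mem_setOf_eq, Set.mem_empty_iff_false, iff_false]
    intro hx
    have hco : (g : X → ℝ) x = ∑ i ∈ t, ((i.1 : X → ℝ) x) ^ 2 := by
      rw [hg]
      push_cast
      simp [Finset.sum_apply, Pi.pow_apply]
    rw [hco] at hx
    have hall : ∀ i ∈ t, ((i.1 : X → ℝ) x) ^ 2 = 0 :=
      (Finset.sum_eq_zero_iff_of_nonneg (fun i _ => sq_nonneg _)).1 hx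
    have hxmem : x ∈ ⋂ i ∈ t, closure {y | (i.1 : X → ℝ) y = 0} := by
      refine Set.mem_iInter₂.2 fun i hi => subset_closure ?_
      exact pow_eq_zero_iff (n := 2) (by norm_num) |>.1 (hall i hi)
    rw [ht] at hxmem
    exact hxmem
  exact hI (Ideal.eq_top_of_isUnit_mem I hgI ((hstar g).2 hZ))
end

section
/- Let X be a completely regular Hausdorff space and A(X) a subring of F(X) with C(X) ⊆ A(X) satisfying condition (*). If every proper ideal of A(X) is pseudofixed, then X is compact. -/
/-- for Tychonoff `X` and `C(X) ⊆ A(X)` satisfying (*), if every proper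
ideal of `A(X)` is pseudofixed then `X` is compact. -/
theorem stmt_14 {X : Type*} [TopologicalSpace X] [T2Space X] [CompletelyRegularSpace X]
    (A : Subring (X → ℝ)) (hC : ∀ g : C(X, ℝ), (g : X → ℝ) ∈ A)
    (hstar : ∀ f : A, IsUnit f ↔ {x | f.1 x = 0} = ∅)
    (hpf : ∀ I : Ideal A, I ≠ ⊤ → (⋂ f ∈ I, closure {x | (f : ↥A).1 x = 0}).Nonempty) :
    CompactSpace X := by
  rcases isEmpty_or_nonempty X with hE | hN
  · infer_instance
  by_contra hnc
  rw [← isCompact_univ_iff] at hnc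
  rw [isCompact_iff_finite_subcover] at hnc
  push_neg at hnc
  obtain ⟨ι, U, hUo, hUcov, hfin⟩ := hnc
  -- choose index for each point
  have hix : ∀ x : X, ∃ i, x ∈ U i := by
    intro x
    simpa using hUcov (Set.mem_univ x)
  choose ix hix using hix
  -- choose continuous function for each point
  have hG : ∀ x : X, ∃ g : C(X, ℝ), g x = 1 ∧ ∀ y, y ∉ U (ix x) → g y = 0 := by
    intro x
    obtain ⟨f, hf, hfx, hfK⟩ := CompletelyRegularSpace.completely_regular x (U (ix x))ᶜ
      (hUo (ix x)).isClosed_compl (by simpa using hix x)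
    refine ⟨⟨fun y => 1 - (f y : ℝ), by fun_prop⟩, ?_, ?_⟩
    · simp [hfx]
    · intro y hy
      have := hfK hy
      simp [this]
  choose G hG1 hG0 using hG
  set S : Set A := Set.range (fun x : X => (⟨(G x : X → ℝ), hC (G x)⟩ : A)) with hS
  set I : Ideal A := Ideal.span S with hI
  have hproper : I ≠ ⊤ := by
    intro htop
    have h1 : (1 : A) ∈ I := htop ▸ Submodule.mem_top
    rw [hI, Ideal.span, Submodule.mem_span_set] at h1
    obtain ⟨c, hcs, hsum⟩ := h1
    -- pick a point x_a for each a in support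
    have hxa : ∀ a ∈ c.support, ∃ x : X, (⟨(G x : X → ℝ), hC (G x)⟩ : A) = a := by
      intro a ha
      exact hcs ha
    choose! xa hxa using hxa
    classical
    set t : Finset ι := c.support.image (fun a => ix (xa a)) with ht
    obtain ⟨y, hy⟩ : ∃ y : X, y ∉ ⋃ i ∈ t, U i := by
      by_contra h
      push_neg at h
      exact hfin t (fun z _ => h z)
    set ev : A →+* ℝ := (Pi.evalRingHom (fun _ : X => ℝ) y).comp A.subtype with hev
    have hzero : ev (c.sum fun i r => r • i) = 0 := by
      rw [map_finsuppSum]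
      apply Finset.sum_eq_zero
      intro a ha
      have hya : y ∉ U (ix (xa a)) := by
        intro hmem
        exact hy (Set.mem_biUnion (Finset.mem_image_of_mem _ ha) hmem)
      have h0 : (G (xa a)) y = 0 := hG0 _ _ hya
      have hay : a.1 y = 0 := by
        rw [← hxa a ha]; exact h0
      show ev (c a • a) = 0
      have hea : ev a = 0 := hay
      rw [smul_eq_mul, map_mul, hea, mul_zero]
    rw [hsum] at hzero
    simp [hev] at hzero
  obtain ⟨p, hp⟩ := hpf I hproper
  have hpmem : ∀ f : A, f ∈ I → p ∈ closure {x | f.1 x = 0} := by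
    intro f hf
    exact Set.mem_iInter₂.mp hp f hf
  have hgpI : (⟨(G p : X → ℝ), hC (G p)⟩ : A) ∈ I := Ideal.subset_span ⟨p, rfl⟩
  have hcl : p ∈ closure {x | (G p) x = 0} := hpmem _ hgpI
  have hclosed : IsClosed {x | (G p) x = 0} := isClosed_eq (G p).continuous continuous_const
  rw [hclosed.closure_eq] at hcl
  have : (G p) p = 0 := hcl
  rw [hG1 p] at this
  norm_num at this
end

section
/- Let X be a Hausdorff space and A(X) a subring of F(X) satisfying condition (*). A proper ideal I of A(X) is not pseudofixed if and only if for every compact subset Y of X there exists f ∈ I such that closure(Z(f)) ∩ Y = ∅. -/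
/-- for Hausdorff `X` and `A(X)` satisfying (*), a proper ideal `I` is not
pseudofixed iff every compact `Y ⊆ X` misses `closure (Z f)` for some `f ∈ I`. -/
theorem stmt_15 {X : Type*} [TopologicalSpace X] [T2Space X]
    (A : Subring (X → ℝ))
    (hstar : ∀ f : A, IsUnit f ↔ {x | f.1 x = 0} = ∅)
    (I : Ideal A) (hI : I ≠ ⊤) :
    ¬ (⋂ f ∈ I, closure {x | (f : ↥A).1 x = 0}).Nonempty ↔
      ∀ Y : Set X, IsCompact Y → ∃ f ∈ I, closure {x | (f : ↥A).1 x = 0} ∩ Y = ∅ := by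
  constructor
  · intro h Y hY
    -- for each y ∈ Y choose g y ∈ I with y ∉ closure Z(g y)
    have hch : ∀ y : Y, ∃ g : A, g ∈ I ∧ (y : X) ∉ closure {x | g.1 x = 0} := by
      intro y
      by_contra hc
      push_neg at hc
      exact h ⟨y, Set.mem_iInter₂.2 fun g hg => hc g hg⟩
    choose g hgI hgy using hch
    -- finite subcover
    have hcover : Y ⊆ ⋃ y : Y, (closure {x | (g y).1 x = 0})ᶜ := by
      intro x hx
      exact Set.mem_iUnion.2 ⟨⟨x, hx⟩, hgy ⟨x, hx⟩⟩
    obtain ⟨t, ht⟩ := hY.elim_finite_subcover (fun y : Y => (closure {x | (g y).1 x = 0})ᶜ)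
      (fun y => isClosed_closure.isOpen_compl) hcover
    refine ⟨∑ y ∈ t, (g y) ^ 2, Ideal.sum_mem I fun y _ => Ideal.pow_mem_of_mem I (hgI y) 2 (by norm_num), ?_⟩
    -- zero set of the sum is contained in each closure
    have hsub : ∀ y ∈ t, closure {x | (∑ y ∈ t, (g y) ^ 2 : A).1 x = 0}
        ⊆ closure {x | (g y).1 x = 0} := by
      intro y hy
      apply closure_mono
      intro x hx
      have hval : ∀ x : X, (∑ y ∈ t, (g y) ^ 2 : A).1 x = ∑ y ∈ t, ((g y).1 x) ^ 2 := by
        intro x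
        have := map_sum ((Pi.evalRingHom (fun _ => ℝ) x).comp A.subtype)
          (fun y => (g y) ^ 2) t
        simpa using this
      have hx0 : ∑ y ∈ t, ((g y).1 x) ^ 2 = 0 := by
        rw [← hval]; exact hx
      have := (Finset.sum_eq_zero_iff_of_nonneg (fun y _ => sq_nonneg ((g y).1 x))).1 hx0 y hy
      exact pow_eq_zero_iff (by norm_num) |>.1 this
    -- conclude disjointness
    rw [Set.eq_empty_iff_forall_notMem]
    rintro x ⟨hxc, hxY⟩
    obtain ⟨y, hy, hxu⟩ := Set.mem_iUnion₂.1 (ht hxY)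
    exact hxu (hsub y hy hxc)
  · intro h ⟨x, hx⟩
    obtain ⟨f, hfI, hf⟩ := h {x} isCompact_singleton
    have hxf := Set.mem_iInter₂.1 hx f hfI
    exact Set.eq_empty_iff_forall_notMem.1 hf x ⟨hxf, rfl⟩
end

section
/- Let A(X) be a subring of F(X) closed under composition with continuous functions ℝ → ℝ. Then for any two prime ideals P and Q of A(X), PQ = P ∩ Q; in particular Pⁿ = P for all n ∈ ℕ. -/
open Filter

noncomputable def cubeIso : ℝ ≃o ℝ :=
  StrictMono.orderIsoOfSurjective (fun x : ℝ => x ^ 3)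
    (Odd.strictMono_pow ⟨1, by norm_num⟩)
    (by
      apply Continuous.surjective (by continuity)
      · exact tendsto_pow_atTop (by norm_num)
      · rw [tendsto_atBot_atBot]
        intro b
        refine ⟨min b (-1), fun x hx => ?_⟩
        have h1 : x ≤ b := le_trans hx (min_le_left _ _)
        have h2 : x ≤ -1 := le_trans hx (min_le_right _ _)
        nlinarith [sq_nonneg x, sq_nonneg (x+1)])

noncomputable def cubeRootCM : C(ℝ, ℝ) :=
  ⟨fun y => cubeIso.symm y, cubeIso.symm.toHomeomorph.continuous⟩

/-- if `A(X)` is closed under composition with continuous `ℝ → ℝ`, then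
for prime ideals `P, Q` of `A(X)`: `PQ = P ∩ Q`, and `Pⁿ = P` for all `n ≥ 1`. -/
theorem stmt_18 {X : Type*} [TopologicalSpace X] [Nonempty X]
    (A : Subring (X → ℝ))
    (hcomp : ∀ g : C(ℝ, ℝ), ∀ f : X → ℝ, f ∈ A → (fun x => g (f x)) ∈ A)
    (P Q : Ideal A) (hP : P.IsPrime) (hQ : Q.IsPrime) :
    P * Q = P ⊓ Q ∧ ∀ n : ℕ, 0 < n → P ^ n = P := by
  have key : ∀ (P Q : Ideal A), P.IsPrime → Q.IsPrime → P * Q = P ⊓ Q := by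
    intro P Q hP hQ
    refine le_antisymm Ideal.mul_le_inf ?_
    intro a ha
    obtain ⟨haP, haQ⟩ := ha
    set r : A := ⟨fun x => cubeRootCM (a.1 x), hcomp cubeRootCM a.1 a.2⟩ with hr
    have hra : r ^ 3 = a := by
      apply Subtype.ext
      funext x
      show (cubeIso.symm (a.1 x)) ^ 3 = a.1 x
      exact cubeIso.apply_symm_apply (a.1 x)
    have hrP : r ∈ P := hP.mem_of_pow_mem 3 (by rw [hra]; exact haP)
    have hrQ : r ∈ Q := hQ.mem_of_pow_mem 3 (by rw [hra]; exact haQ)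
    have : r * r ^ 2 ∈ P * Q := Ideal.mul_mem_mul hrP (Ideal.pow_mem_of_mem Q hrQ 2 (by norm_num))
    rwa [show r * r ^ 2 = a by rw [← hra]; ring] at this
  refine ⟨key P Q hP hQ, ?_⟩
  have hPP : P * P = P := by rw [key P P hP hP]; exact inf_idem P
  intro n hn
  induction n with
  | zero => exact absurd hn (by norm_num)
  | succ m ih =>
    rcases Nat.eq_zero_or_pos m with hm | hm
    · subst hm; simp
    · rw [pow_succ, ih hm, hPP]
end

section
/- Every prime ideal P of the ring B₁(X) of Baire one functions on a topological space X is absolutely convex: if f ∈ B₁(X), g ∈ P, and |f| ≤ |g| pointwise, then f ∈ P. -/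
/-!
If `|f| ≤ |g|`, then `k = f² / |g|` (zero where `g` vanishes) satisfies `f⁴ = g² k²`, so a prime
ideal containing `g` contains `f⁴` and hence `f`. The only issue is that `k` is Baire one: it is
`φ ∘ (f, g)` for `φ(a, b) = a² / max |a| |b|`, which is continuous on all of `ℝ²` because
`|φ(a, b)| ≤ |a|`, and Baire one functions are closed under composition with continuous maps
`ℝ² → ℝ`.
-/

open Filter Topology

theorem IsBaireOne.comp_prodMk {X : Type*} [TopologicalSpace X] {φ : ℝ × ℝ → ℝ}
    (hφ : Continuous φ) {f g : X → ℝ} (hf : IsBaireOne f) (hg : IsBaireOne g) :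
    IsBaireOne fun x => φ (f x, g x) := by
  obtain ⟨u, hu⟩ := hf
  obtain ⟨v, hv⟩ := hg
  refine ⟨fun n => ⟨fun x => φ (u n x, v n x), by fun_prop⟩, fun x => ?_⟩
  exact (hφ.tendsto (f x, g x)).comp ((hu x).prodMk_nhds (hv x))

theorem abs_sq_div_max_abs_le (a b : ℝ) : |(a ^ 2 / max |a| |b|)| ≤ |a| := by
  rcases ((abs_nonneg a).trans (le_max_left _ |b|)).eq_or_lt with hm | hm
  · simp [← hm]
  · rw [abs_of_nonneg (by positivity), div_le_iff₀ hm, ← sq_abs, pow_two]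
    exact mul_le_mul_of_nonneg_left (le_max_left _ _) (abs_nonneg a)

theorem continuous_sq_div_max_abs : Continuous fun p : ℝ × ℝ => p.1 ^ 2 / max |p.1| |p.2| := by
  refine continuous_iff_continuousAt.2 fun p => ?_
  by_cases hp : max |p.1| |p.2| = 0
  · have hp₁ : p.1 = 0 := abs_eq_zero.1 (le_antisymm (hp ▸ le_max_left _ _) (abs_nonneg _))
    have hlim : Tendsto (fun q : ℝ × ℝ => |q.1|) (𝓝 p) (𝓝 0) :=
      continuous_fst.abs.tendsto' p 0 (by simp [hp₁])
    simpa [ContinuousAt, hp] using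
      squeeze_zero_norm (fun q => abs_sq_div_max_abs_le q.1 q.2) hlim
  · exact ContinuousAt.div (by fun_prop) (by fun_prop) hp

theorem pow_four_eq_sq_mul_sq_div_max_abs {a b : ℝ} (h : |a| ≤ |b|) :
    a ^ 4 = b ^ 2 * (a ^ 2 / max |a| |b|) ^ 2 := by
  rw [max_eq_right h]
  rcases eq_or_ne b 0 with rfl | hb
  · simp [show a = 0 by simpa using h]
  · field_simp
    rw [sq_abs]

theorem stmt_19_general {X : Type*} [TopologicalSpace X]
    (B : Subring (X → ℝ))
    (hB : ∀ f : X → ℝ, f ∈ B ↔ ∃ u : ℕ → C(X, ℝ),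
      ∀ x, Filter.Tendsto (fun n => (u n) x) Filter.atTop (nhds (f x)))
    (P : Ideal B) (hP : P.IsPrime)
    (f g : B) (hg : g ∈ P) (hfg : ∀ x, |f.1 x| ≤ |g.1 x|) :
    f ∈ P := by
  have hk : (fun x => f.1 x ^ 2 / max |f.1 x| |g.1 x|) ∈ B :=
    (hB _).2 <| IsBaireOne.comp_prodMk continuous_sq_div_max_abs ((hB _).1 f.2) ((hB _).1 g.2)
  have hf4 : f ^ 4 = g ^ 2 * ⟨_, hk⟩ ^ 2 :=
    Subtype.ext <| funext fun x => pow_four_eq_sq_mul_sq_div_max_abs (hfg x)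
  refine hP.mem_of_pow_mem 4 ?_
  rw [hf4]
  exact P.mul_mem_right _ (P.pow_mem_of_mem hg 2 two_pos)

/-- every prime ideal of `B₁(X)` is absolutely convex. -/
theorem stmt_19 {X : Type*} [TopologicalSpace X] [Nonempty X]
    (B : Subring (X → ℝ))
    (hB : ∀ f : X → ℝ, f ∈ B ↔ ∃ u : ℕ → C(X, ℝ),
      ∀ x, Filter.Tendsto (fun n => (u n) x) Filter.atTop (nhds (f x)))
    (P : Ideal B) (hP : P.IsPrime)
    (f g : B) (hg : g ∈ P) (hfg : ∀ x, |f.1 x| ≤ |g.1 x|) :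
    f ∈ P :=
  stmt_19_general B hB P hP f g hg hfg
end
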